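/- arXiv:2012.01119 — 6 statements merged into one kernel-verified Lean document; each statement's English description precedes it below -/
import Mathlib

section
/- Let ι be a finite index type and let B and G be disjoint finite subsets of ι. Let q, w : ι → ℝ be nonnegative functions and let c ≥ 0 be a real number such that q(b) ≥ c·q(g) for every b ∈ B and g ∈ G. Assume ∑_{g∈G} q(g)·w(g) > 0 and ∑_{g∈G} w(g) > 0. Then ∑_{g∈G} q(g)·w(g) / (∑_{g∈G} q(g)·w(g) + ∑_{b∈B} q(b)·w(b)) ≤ 1 / (1 + c · (∑_{b∈B} w(b)) / (∑_{g∈G} w(g))). -/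
theorem stmt_0 {ι : Type*} [Fintype ι] (B G : Finset ι) (hBG : Disjoint B G)
    (q w : ι → ℝ) (hq : ∀ i, 0 ≤ q i) (hw : ∀ i, 0 ≤ w i)
    (c : ℝ) (hc : 0 ≤ c)
    (hqc : ∀ b ∈ B, ∀ g ∈ G, q b ≥ c * q g)
    (hGq : 0 < ∑ g ∈ G, q g * w g) (hGw : 0 < ∑ g ∈ G, w g) :
    (∑ g ∈ G, q g * w g) / ((∑ g ∈ G, q g * w g) + ∑ b ∈ B, q b * w b) ≤
      1 / (1 + c * (∑ b ∈ B, w b) / (∑ g ∈ G, w g)) := by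
  have hT0 : 0 ≤ ∑ b ∈ B, q b * w b :=
    Finset.sum_nonneg fun b _ => mul_nonneg (hq b) (hw b)
  have hWB0 : 0 ≤ ∑ b ∈ B, w b := Finset.sum_nonneg fun b _ => hw b
  have key : c * (∑ b ∈ B, w b) * (∑ g ∈ G, q g * w g) ≤
      (∑ b ∈ B, q b * w b) * (∑ g ∈ G, w g) := by
    have e1 : c * (∑ b ∈ B, w b) * (∑ g ∈ G, q g * w g) =
        ∑ b ∈ B, ∑ g ∈ G, c * (w b * (q g * w g)) := by
      rw [mul_assoc, Finset.sum_mul_sum, Finset.mul_sum]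
      exact Finset.sum_congr rfl fun b _ => by rw [Finset.mul_sum]
    have e2 : (∑ b ∈ B, q b * w b) * (∑ g ∈ G, w g) =
        ∑ b ∈ B, ∑ g ∈ G, q b * w b * w g := Finset.sum_mul_sum _ _ _ _
    rw [e1, e2]
    apply Finset.sum_le_sum
    intro b hb
    apply Finset.sum_le_sum
    intro g hg
    have h := hqc b hb g hg
    nlinarith [hw b, hw g, hq g,
      mul_le_mul_of_nonneg_right (mul_le_mul_of_nonneg_right h (hw b)) (hw g)]
  have hden2 : 0 < 1 + c * (∑ b ∈ B, w b) / (∑ g ∈ G, w g) := by positivity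
  rw [div_le_div_iff₀ (by linarith) hden2]
  have hstep : (∑ g ∈ G, q g * w g) * (c * (∑ b ∈ B, w b) / (∑ g ∈ G, w g)) ≤
      ∑ b ∈ B, q b * w b := by
    rw [← mul_div_assoc, div_le_iff₀ hGw]
    nlinarith
  nlinarith
end

section
/- Let P, δ, r be real numbers with 0 < P, 0 < δ, P + δ < 1 and r > 0, and define ε* = −ln( (P/(1−P)) · (1/(δ+P) − 1) ) / r. Then ε* is the largest differential-privacy parameter achieving guessing advantage at most δ: for every real ε, 1/(1 + exp(−ε·r)·(1−P)/P) − P ≤ δ if and only if ε ≤ ε*. -/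
theorem stmt_3 (P δ r : ℝ) (hP : 0 < P) (hδ : 0 < δ) (hPδ : P + δ < 1) (hr : 0 < r)
    (εstar : ℝ) (hεstar : εstar = -Real.log (P / (1 - P) * (1 / (δ + P) - 1)) / r) :
    ∀ ε : ℝ, (1 / (1 + Real.exp (-ε * r) * (1 - P) / P) - P ≤ δ ↔ ε ≤ εstar) := by
  intro ε
  have h1P : 0 < 1 - P := by linarith
  have hδP : 0 < δ + P := by linarith
  have h1δP : 0 < 1 - (δ + P) := by linarith
  have hK : 0 < P / (1 - P) * (1 / (δ + P) - 1) := by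
    apply mul_pos (div_pos hP h1P)
    rw [sub_pos, lt_div_iff₀ hδP]; linarith
  have hE : 0 < Real.exp (-ε * r) := Real.exp_pos _
  have hA : 0 < 1 + Real.exp (-ε * r) * (1 - P) / P := by positivity
  have key : 1 / (1 + Real.exp (-ε * r) * (1 - P) / P) - P ≤ δ ↔
      P / (1 - P) * (1 / (δ + P) - 1) ≤ Real.exp (-ε * r) := by
    rw [sub_le_iff_le_add, div_le_iff₀ hA]
    field_simp
    constructor <;> intro h <;> nlinarith
  rw [key, ← Real.log_le_iff_le_exp hK, hεstar, le_div_iff₀ hr]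
  constructor <;> intro h <;> linarith
end

section
/- Let δ ∈ (0,1) be fixed. For every real P with 0 < P < 1 − δ, the inequality (P/(1−P)) · (1/(δ+P) − 1) ≤ ((1−δ)/(1+δ))² holds, with equality if and only if P = (1−δ)/2. Consequently, for any r > 0, the function P ↦ −ln( (P/(1−P)) · (1/(δ+P) − 1) )/r attains its minimum over P ∈ (0, 1−δ) exactly at P = (1−δ)/2. -/
theorem stmt_4 (δ : ℝ) (hδ0 : 0 < δ) (hδ1 : δ < 1) :
    (∀ P : ℝ, 0 < P → P < 1 - δ →
      (P / (1 - P) * (1 / (δ + P) - 1) ≤ ((1 - δ) / (1 + δ)) ^ 2 ∧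
        (P / (1 - P) * (1 / (δ + P) - 1) = ((1 - δ) / (1 + δ)) ^ 2 ↔ P = (1 - δ) / 2))) ∧
    (∀ r : ℝ, 0 < r → ∀ P : ℝ, 0 < P → P < 1 - δ →
      (-Real.log ((1 - δ) / 2 / (1 - (1 - δ) / 2) * (1 / (δ + (1 - δ) / 2) - 1)) / r ≤
          -Real.log (P / (1 - P) * (1 / (δ + P) - 1)) / r ∧
        (-Real.log ((1 - δ) / 2 / (1 - (1 - δ) / 2) * (1 / (δ + (1 - δ) / 2) - 1)) / r =
            -Real.log (P / (1 - P) * (1 / (δ + P) - 1)) / r ↔ P = (1 - δ) / 2))) := by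
  have h1d : (0:ℝ) < 1 + δ := by linarith
  have key : ∀ P : ℝ, 0 < P → P < 1 - δ →
      (P / (1 - P) * (1 / (δ + P) - 1) ≤ ((1 - δ) / (1 + δ)) ^ 2 ∧
        (P / (1 - P) * (1 / (δ + P) - 1) = ((1 - δ) / (1 + δ)) ^ 2 ↔ P = (1 - δ) / 2)) := by
    intro P hP0 hP1
    have h1P : 0 < 1 - P := by linarith
    have hdP : 0 < δ + P := by linarith
    have hA : P / (1 - P) * (1 / (δ + P) - 1)
        = P * (1 - (δ + P)) / ((1 - P) * (δ + P)) := by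
      field_simp
    have hB : ((1 - δ) / (1 + δ)) ^ 2 = (1 - δ)^2 / (1 + δ)^2 := by
      rw [div_pow]
    have hden : 0 < (1 - P) * (δ + P) := by positivity
    have hden2 : 0 < (1 + δ)^2 := by positivity
    constructor
    · rw [hA, hB, div_le_div_iff₀ hden hden2]
      nlinarith [sq_nonneg (2*P - (1 - δ))]
    · constructor
      · intro h
        rw [hA, hB, div_eq_div_iff hden.ne' hden2.ne'] at h
        have hz : δ * (2*P - (1 - δ))^2 = 0 := by nlinarith
        have h2 : (2*P - (1 - δ))^2 = 0 := by
          rcases mul_eq_zero.1 hz with h' | h'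
          · linarith
          · exact h'
        have h3 : 2*P - (1 - δ) = 0 := by
          exact pow_eq_zero_iff (by norm_num) |>.1 h2
        linarith
      · intro h
        subst h
        rw [hA, hB, div_eq_div_iff hden.ne' hden2.ne']
        ring
  refine ⟨key, ?_⟩
  intro r hr P hP0 hP1
  set P₀ : ℝ := (1 - δ) / 2 with hP₀def
  have hP₀0 : 0 < P₀ := by simp [hP₀def]; linarith
  have hP₀1 : P₀ < 1 - δ := by simp [hP₀def]; linarith
  -- positivity of f(P)
  have fpos : ∀ Q : ℝ, 0 < Q → Q < 1 - δ → 0 < Q / (1 - Q) * (1 / (δ + Q) - 1) := by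
    intro Q hQ0 hQ1
    have h1Q : 0 < 1 - Q := by linarith
    have hdQ : 0 < δ + Q := by linarith
    have hdQ1 : δ + Q < 1 := by linarith
    have : 0 < 1 / (δ + Q) - 1 := by
      rw [sub_pos, lt_div_iff₀ hdQ]; linarith
    positivity
  have hfP := fpos P hP0 hP1
  have hfP₀ := fpos P₀ hP₀0 hP₀1
  obtain ⟨hle, hiff⟩ := key P hP0 hP1
  obtain ⟨_, hiff₀⟩ := key P₀ hP₀0 hP₀1
  have hval₀ : P₀ / (1 - P₀) * (1 / (δ + P₀) - 1) = ((1 - δ) / (1 + δ)) ^ 2 :=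
    hiff₀.2 rfl
  have hlef : P / (1 - P) * (1 / (δ + P) - 1) ≤ P₀ / (1 - P₀) * (1 / (δ + P₀) - 1) := by
    rw [hval₀]; exact hle
  have hlog : Real.log (P / (1 - P) * (1 / (δ + P) - 1)) ≤
      Real.log (P₀ / (1 - P₀) * (1 / (δ + P₀) - 1)) :=
    Real.log_le_log hfP hlef
  constructor
  · exact (div_le_div_iff_of_pos_right hr).2 (by linarith)
  · constructor
    · intro h
      have h2 : Real.log (P₀ / (1 - P₀) * (1 / (δ + P₀) - 1)) =
          Real.log (P / (1 - P) * (1 / (δ + P) - 1)) := by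
        have h' := congrArg (fun x => x * r) h
        simp only [div_mul_cancel₀ _ hr.ne'] at h'
        linarith
      have h3 : P / (1 - P) * (1 / (δ + P) - 1) = P₀ / (1 - P₀) * (1 / (δ + P₀) - 1) :=
        (Real.log_injOn_pos (Set.mem_Ioi.2 hfP₀) (Set.mem_Ioi.2 hfP) h2).symm
      exact hiff.1 (by rw [h3, hval₀])
    · intro h; subst h; rfl
end

section
/- Let P ∈ (0,1), ε > 0 and r > 0 be real numbers, and define δ = P / ((1−P)·exp(−ε·r) + P) − P. Then 0 < δ, P + δ < 1, and ε = −ln( (P/(1−P)) · (1/(δ+P) − 1) ) / r. In other words, the guessing advantage attached to an occurrence of a directly-follows relation protected with an ε-differentially private mechanism is δ = P/((1−P)·exp(−ε·r)+P) − P, and this formula inverts the formula expressing ε in terms of δ. -/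
theorem stmt_5 (P ε r δ : ℝ) (hP0 : 0 < P) (hP1 : P < 1) (hε : 0 < ε) (hr : 0 < r)
    (hδ : δ = P / ((1 - P) * Real.exp (-ε * r) + P) - P) :
    0 < δ ∧ P + δ < 1 ∧ ε = -Real.log (P / (1 - P) * (1 / (δ + P) - 1)) / r := by
  set E := Real.exp (-ε * r) with hE
  have hE0 : 0 < E := Real.exp_pos _
  have hE1 : E < 1 := by
    rw [hE]
    apply Real.exp_lt_one_iff.mpr
    nlinarith
  have h1P : 0 < 1 - P := by linarith
  have hD : 0 < (1 - P) * E + P := by nlinarith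
  have hDlt : (1 - P) * E + P < 1 := by nlinarith
  have hδP : δ + P = P / ((1 - P) * E + P) := by rw [hδ]; ring
  have h1 : 0 < δ := by
    have : P < P / ((1 - P) * E + P) := by
      rw [lt_div_iff₀ hD]; nlinarith
    linarith [hδP ▸ this]
  have h2 : P + δ < 1 := by
    have : P / ((1 - P) * E + P) < 1 := by
      rw [div_lt_one hD]; nlinarith
    linarith [hδP ▸ this]
  refine ⟨h1, h2, ?_⟩
  have hkey : P / (1 - P) * (1 / (δ + P) - 1) = E := by
    rw [hδP]
    field_simp
    ring
  rw [hkey, hE, Real.log_exp]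
  field_simp
end

section
/- Let ε > 0 be a real number and define δ = (1 − √(exp(−ε))) / (1 + √(exp(−ε))). Then 0 < δ < 1, and setting P = (1−δ)/2 one has (P/(1−P)) · (1/(δ+P) − 1) = exp(−ε); equivalently, δ is the unique value in (0,1) such that ((1−δ)/(1+δ))² = exp(−ε). -/
theorem stmt_6 (ε δ : ℝ) (hε : 0 < ε)
    (hδ : δ = (1 - Real.sqrt (Real.exp (-ε))) / (1 + Real.sqrt (Real.exp (-ε)))) :
    0 < δ ∧ δ < 1 ∧
    ((1 - δ) / 2) / (1 - (1 - δ) / 2) * (1 / (δ + (1 - δ) / 2) - 1) = Real.exp (-ε) ∧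
    (∀ δ' : ℝ, 0 < δ' → δ' < 1 → ((1 - δ') / (1 + δ')) ^ 2 = Real.exp (-ε) → δ' = δ) := by
  set s := Real.sqrt (Real.exp (-ε)) with hs
  have hs0 : 0 < s := Real.sqrt_pos.mpr (Real.exp_pos _)
  have hs1 : s < 1 := by
    have : Real.exp (-ε) < 1 := by
      rw [Real.exp_lt_one_iff]; linarith
    calc s < Real.sqrt 1 := Real.sqrt_lt_sqrt (Real.exp_pos _).le this
      _ = 1 := Real.sqrt_one
  have hsq : s ^ 2 = Real.exp (-ε) := Real.sq_sqrt (Real.exp_pos _).le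
  have hden : (0:ℝ) < 1 + s := by linarith
  have hδ0 : 0 < δ := by rw [hδ]; exact div_pos (by linarith) hden
  have hδ1 : δ < 1 := by rw [hδ]; rw [div_lt_one hden]; linarith
  have h1δ : (0:ℝ) < 1 + δ := by linarith
  have key : (1 - δ) / (1 + δ) = s := by
    rw [hδ]
    field_simp
    ring
  have heq : ((1 - δ) / 2) / (1 - (1 - δ) / 2) * (1 / (δ + (1 - δ) / 2) - 1)
      = ((1 - δ) / (1 + δ)) ^ 2 := by
    have h2 : (1 : ℝ) - (1 - δ) / 2 = (1 + δ) / 2 := by ring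
    have h3 : δ + (1 - δ) / 2 = (1 + δ) / 2 := by ring
    rw [h2, h3]
    field_simp
    ring
  refine ⟨hδ0, hδ1, ?_, ?_⟩
  · rw [heq, key, hsq]
  · intro δ' h0 h1 hsq'
    have h1δ' : (0:ℝ) < 1 + δ' := by linarith
    have hr0 : 0 < (1 - δ') / (1 + δ') := div_pos (by linarith) h1δ'
    have hr : (1 - δ') / (1 + δ') = s := by
      nlinarith [hsq', hsq, hr0, hs0]
    rw [div_eq_iff (ne_of_gt h1δ')] at hr
    rw [hδ]
    rw [eq_div_iff (ne_of_gt hden)]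
    nlinarith
end

section
/- Let λ > 0 and let t₁, t₂ ∈ ℝ. Then for every measurable set S ⊆ ℝ, ∫_S (1/(2λ))·exp(−|x−t₁|/λ) dx ≤ exp(|t₁−t₂|/λ) · ∫_S (1/(2λ))·exp(−|x−t₂|/λ) dx. In particular, the mechanism that outputs the true value plus centered Laplace noise of scale λ = Δf/ε satisfies the ε-differential-privacy inequality Pr[M(D₁) ∈ S] ≤ exp(ε·|f(D₁)−f(D₂)|/Δf) · Pr[M(D₂) ∈ S] whenever the true outputs are t₁ = f(D₁) and t₂ = f(D₂). -/
open MeasureTheory Set Real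

lemma lap_int0 (l : ℝ) (hl : 0 < l) :
    Integrable (fun x : ℝ => Real.exp (-|x| / l)) := by
  have hIoi : IntegrableOn (fun x : ℝ => Real.exp (-|x| / l)) (Ioi 0) := by
    refine (exp_neg_integrableOn_Ioi 0 (b := 1/l) (by positivity)).congr_fun ?_ measurableSet_Ioi
    intro x hx
    show rexp (-(1 / l) * x) = rexp (-|x| / l)
    rw [abs_of_pos hx]; ring_nf
  rw [← integrableOn_univ, ← @Iio_union_Ici _ _ (0 : ℝ), integrableOn_union,
    integrableOn_Ici_iff_integrableOn_Ioi]
  refine ⟨?_, hIoi⟩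
  rw [← (Measure.measurePreserving_neg (volume : Measure ℝ)).integrableOn_comp_preimage
      (Homeomorph.neg ℝ).measurableEmbedding]
  simpa [Function.comp_def, abs_neg, neg_preimage, neg_Iio, neg_zero] using hIoi

lemma lap_int (l t : ℝ) (hl : 0 < l) :
    Integrable (fun x : ℝ => Real.exp (-|x - t| / l)) := by
  simpa using (lap_int0 l hl).comp_sub_right t

theorem stmt_10 (l t₁ t₂ : ℝ) (hl : 0 < l) (S : Set ℝ) (hS : MeasurableSet S) :
    ∫ x in S, (1 / (2 * l)) * Real.exp (-|x - t₁| / l) ≤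
      Real.exp (|t₁ - t₂| / l) * ∫ x in S, (1 / (2 * l)) * Real.exp (-|x - t₂| / l) := by
  rw [← integral_const_mul]
  apply setIntegral_mono_on
  · exact (((lap_int l t₁ hl).const_mul _).integrableOn)
  · exact ((((lap_int l t₂ hl).const_mul _).const_mul _).integrableOn)
  · exact hS
  · intro x _
    rw [mul_comm (Real.exp _), mul_assoc, ← Real.exp_add]
    apply mul_le_mul_of_nonneg_left _ (by positivity)
    apply Real.exp_le_exp.mpr
    rw [← add_div, div_le_div_iff_of_pos_right hl]  -- guess name
    have h := abs_sub_abs_le_abs_sub (x - t₂) (x - t₁)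
    have h2 : x - t₂ - (x - t₁) = t₁ - t₂ := by ring
    rw [h2] at h
    linarith
end
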